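/- Assume the piecewise linear Lasso homotopy of the perturb-one problem is valid for all t ∈ ℝ (i.e., at every point of change only one coordinate enters or leaves the active set, and Σ̂_J has full rank for every active set J occurring along the path). If max_{1≤i≤n} |x_{i,J}'Σ̂_J^{-1}x_{n+1,J}| < n for every active set J occurring as t varies over the real line, then the Lasso conformal prediction set Ĉ(x_{n+1}) is an interval. -/

import Mathlib

/-! Along the homotopy path write `r_{n+1}(t) = t - x_{n+1}'β(t)` and `r_i(t) = y_i - x_i'β(t)`.
On a piece with active set `J` and `D = 1 + n⁻¹x_{n+1,J}'Σ̂_J⁻¹x_{n+1,J} > 0` (`Σ̂_J` is positive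
semidefinite) the slopes are `r_{n+1}' = 1/D` and `r_i' = -n⁻¹x_{i,J}'Σ̂_J⁻¹x_{n+1,J}/D`, so the
leverage bound makes `r_{n+1} ± r_i` nondecreasing on the whole real line. Hence, for `s ≤ t ≤ u`,
an index with `|r_i(t)| ≤ |r_{n+1}(t)|` keeps this property at `s` when `r_{n+1}(t) ≤ 0` and at `u`
when `r_{n+1}(t) ≥ 0`. So the p-value at `t` is at least the smaller of those at `s` and `u`, and
its superlevel sets are intervals. -/

open scoped BigOperators Matrix

noncomputable section

/-- Euclidean inner product on `Fin p → ℝ`. -/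
def dotp {p : ℕ} (a b : Fin p → ℝ) : ℝ := ∑ j, a j * b j

/-- The Lasso objective `F(β) = (1/2)∑ᵢ (yᵢ − xᵢ'β)² + λ‖β‖₁`. -/
def lassoObj {n p : ℕ} (x : Fin n → Fin p → ℝ) (y : Fin n → ℝ) (lam : ℝ)
    (β : Fin p → ℝ) : ℝ :=
  (1 / 2) * ∑ i, (y i - dotp (x i) β) ^ 2 + lam * ∑ j, |β j|

/-- The augmented Lasso objective with `(x_{n+1}, ynew)` added as the `(n+1)`-th sample. -/
def augObj {n p : ℕ} (x : Fin n → Fin p → ℝ) (y : Fin n → ℝ) (xnew : Fin p → ℝ)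
    (lam : ℝ) (ynew : ℝ) (β : Fin p → ℝ) : ℝ :=
  lassoObj x y lam β + (1 / 2) * (ynew - dotp xnew β) ^ 2

/-- The submatrix `Σ̂_J` of the sample covariance matrix `Σ̂ = n⁻¹∑ᵢ xᵢxᵢ'`. -/
def gramJ {n p : ℕ} (x : Fin n → Fin p → ℝ) (J : Finset (Fin p)) : Matrix ↥J ↥J ℝ :=
  Matrix.of fun a b => (1 / (n : ℝ)) * ∑ i, x i a.1 * x i b.1

/-- The subvector `u_J` of `u` with coordinates in `J`. -/
def subv {p : ℕ} (u : Fin p → ℝ) (J : Finset (Fin p)) : ↥J → ℝ := fun a => u a.1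

/-- `Σ̂_J⁻¹ x_{n+1,J}`. -/
def invPart {n p : ℕ} (x : Fin n → Fin p → ℝ) (J : Finset (Fin p)) (xnew : Fin p → ℝ) :
    ↥J → ℝ :=
  (gramJ x J)⁻¹ *ᵥ subv xnew J

/-- The denominator `1 + n⁻¹ x_{n+1,J}'Σ̂_J⁻¹x_{n+1,J}`. -/
def denomC {n p : ℕ} (x : Fin n → Fin p → ℝ) (J : Finset (Fin p)) (xnew : Fin p → ℝ) : ℝ :=
  1 + (1 / (n : ℝ)) * (subv xnew J ⬝ᵥ invPart x J xnew)

/-- The slope vector `η = n⁻¹Σ̂_J⁻¹x_{n+1,J} / (1 + n⁻¹x_{n+1,J}'Σ̂_J⁻¹x_{n+1,J})`,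
extended by `0` off `J`. -/
def etaV {n p : ℕ} (x : Fin n → Fin p → ℝ) (J : Finset (Fin p)) (xnew : Fin p → ℝ) :
    Fin p → ℝ := fun j =>
  if h : j ∈ J then (1 / (n : ℝ)) * invPart x J xnew ⟨j, h⟩ / denomC x J xnew else 0

/-- The dual slope vector
`γ = (x_{n+1,J^c} − Σ̂_{J^c,J}Σ̂_J⁻¹x_{n+1,J}) / (1 + n⁻¹x_{n+1,J}'Σ̂_J⁻¹x_{n+1,J})`
(only its coordinates off `J` are used). -/
def gammaV {n p : ℕ} (x : Fin n → Fin p → ℝ) (J : Finset (Fin p)) (xnew : Fin p → ℝ) :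
    Fin p → ℝ := fun j =>
  (xnew j - ∑ a : ↥J, ((1 / (n : ℝ)) * ∑ i, x i j * x i a.1) * invPart x J xnew a) /
    denomC x J xnew

/-- `rpp a b` is `(a/b)₊₊ ∈ EReal`, the ratio `a/b` computed with the conventions
`0/0 = 0`, `z/0 = sign(z)·∞`, and then `(z)₊₊ = z` if `z > 0`, `(z)₊₊ = +∞` if `z ≤ 0`.
(When `b = 0` the result is always `+∞`, matching the conventions.) -/
def rpp (a b : ℝ) : EReal := if b ≠ 0 ∧ 0 < a / b then ((a / b : ℝ) : EReal) else ⊤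

/-- The first point of change
`t₁ = min_{j∈J}(−β̂_j/η_j)₊₊ ∧ min_{j∈J^c}((sign(γ_j)λ − v_j)/γ_j)₊₊`. -/
def tOne {n p : ℕ} (x : Fin n → Fin p → ℝ) (J : Finset (Fin p)) (xnew : Fin p → ℝ)
    (βhat v : Fin p → ℝ) (lam : ℝ) : EReal :=
  (J.inf fun j => rpp (-(βhat j)) (etaV x J xnew j)) ⊓
    (Jᶜ.inf fun j => rpp (Real.sign (gammaV x J xnew j) * lam - v j) (gammaV x J xnew j))

/-- The homotopy solution `β(t)`: `β(t)_J = β̂_J + t·η`, `β(t)_{J^c} = 0`. -/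
def betaT {n p : ℕ} (x : Fin n → Fin p → ℝ) (J : Finset (Fin p)) (xnew : Fin p → ℝ)
    (βhat : Fin p → ℝ) (t : ℝ) : Fin p → ℝ := fun j =>
  if j ∈ J then βhat j + t * etaV x J xnew j else 0

/-- The conformal p-value `p̂_y = 1 − (n+1)⁻¹·#{1 ≤ i ≤ n+1 : |r_i(y)| ≤ |r_{n+1}(y)|}`, where
`r_i(y) = y_i − x_i'β̃(y)` for `i ≤ n` and `r_{n+1}(y) = y − x_{n+1}'β̃(y)`; the `+1` in the
numerator accounts for the index `i = n+1`, which always satisfies `|r_{n+1}| ≤ |r_{n+1}|`. -/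
def pvalConf {n p : ℕ} (x : Fin n → Fin p → ℝ) (y : Fin n → ℝ) (xnew : Fin p → ℝ)
    (βt : ℝ → Fin p → ℝ) (t : ℝ) : ℝ :=
  1 - (((Finset.univ.filter fun i : Fin n =>
        |y i - dotp (x i) (βt t)| ≤ |t - dotp xnew (βt t)|).card + 1 : ℝ)) / (n + 1)

open Set Filter Topology Finset

theorem monotone_of_eventually_nhdsGE_nhdsLE {α β : Type*} [ConditionallyCompleteLinearOrder α]
    [TopologicalSpace α] [OrderTopology α] [DenselyOrdered α] [NoMinOrder α] [NoMaxOrder α]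
    [Preorder β] {h : α → β}
    (hright : ∀ a, ∀ᶠ t in 𝓝[≥] a, h a ≤ h t) (hleft : ∀ a, ∀ᶠ t in 𝓝[≤] a, h t ≤ h a) :
    Monotone h := by
  intro a b hab
  set S := {t ∈ Icc a b | h a ≤ h t}
  have haS : a ∈ S := ⟨⟨le_rfl, hab⟩, le_rfl⟩
  have hS : BddAbove S := ⟨b, fun t ht => ht.1.2⟩
  set c := sSup S
  have hac : a ≤ c := le_csSup hS haS
  have hcb : c ≤ b := csSup_le ⟨a, haS⟩ fun t ht => ht.1.2
  have hc : h a ≤ h c := by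
    obtain ⟨l, hlc, hl⟩ := mem_nhdsLE_iff_exists_Ioc_subset.mp (hleft c)
    obtain ⟨t, htS, hlt⟩ := exists_lt_of_lt_csSup ⟨a, haS⟩ hlc
    exact htS.2.trans (hl ⟨hlt, le_csSup hS htS⟩)
  obtain hcb | hcb := hcb.eq_or_lt
  · exact hcb ▸ hc
  obtain ⟨u, hcu, hu⟩ := mem_nhdsGE_iff_exists_Icc_subset.mp (hright c)
  have hmin : c < min u b := lt_min hcu hcb
  have hminS : min u b ∈ S :=
    ⟨⟨hac.trans hmin.le, min_le_right _ _⟩, hc.trans (hu ⟨hmin.le, min_le_left _ _⟩)⟩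
  exact absurd (le_csSup hS hminS) hmin.not_ge

section ResidualCounting

variable {α : Type*} [Preorder α] {a b : α → ℝ}

theorem abs_le_abs_of_le_of_nonpos (hadd : Monotone (a + b)) (hsub : Monotone (a - b))
    {s t : α} (hst : s ≤ t) (ha : a t ≤ 0) (h : |b t| ≤ |a t|) : |b s| ≤ |a s| := by
  rw [abs_of_nonpos ha, abs_le] at h
  have h₁ := hadd hst
  have h₂ := hsub hst
  simp only [Pi.add_apply, Pi.sub_apply] at h₁ h₂
  rw [abs_le]
  constructor <;> linarith [neg_abs_le (a s)]

theorem abs_le_abs_of_le_of_nonneg (hadd : Monotone (a + b)) (hsub : Monotone (a - b))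
    {s t : α} (hst : s ≤ t) (ha : 0 ≤ a s) (h : |b s| ≤ |a s|) : |b t| ≤ |a t| := by
  rw [abs_of_nonneg ha, abs_le] at h
  have h₁ := hadd hst
  have h₂ := hsub hst
  simp only [Pi.add_apply, Pi.sub_apply] at h₁ h₂
  rw [abs_le]
  constructor <;> linarith [le_abs_self (a t)]

theorem card_filter_abs_le_abs_le_max {ι : Type*} [Fintype ι] {b : ι → α → ℝ}
    (hadd : ∀ i, Monotone (a + b i)) (hsub : ∀ i, Monotone (a - b i))
    {s t u : α} (hst : s ≤ t) (htu : t ≤ u) :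
    #{i | |b i t| ≤ |a t|} ≤ max #{i | |b i s| ≤ |a s|} #{i | |b i u| ≤ |a u|} := by
  rcases le_total (a t) 0 with ha | ha
  · refine le_max_of_le_left (card_le_card (monotone_filter_right _ fun i _ => ?_))
    exact abs_le_abs_of_le_of_nonpos (hadd i) (hsub i) hst ha
  · refine le_max_of_le_right (card_le_card (monotone_filter_right _ fun i _ => ?_))
    exact abs_le_abs_of_le_of_nonneg (hadd i) (hsub i) htu ha

end ResidualCounting

theorem Set.ordConnected_setOf_le_of_min_le {α β : Type*} [Preorder α] [LinearOrder β]
    {f : α → β} (hf : ∀ ⦃s t u⦄, s ≤ t → t ≤ u → min (f s) (f u) ≤ f t) (r : β) :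
    {t | r ≤ f t}.OrdConnected :=
  ⟨fun _ hs _ hu _ ht => (le_min hs hu).trans (hf ht.1 ht.2)⟩

def newResidual {p : ℕ} (xnew : Fin p → ℝ) (βt : ℝ → Fin p → ℝ) (t : ℝ) : ℝ :=
  t - dotp xnew (βt t)

def sampleResidual {n p : ℕ} (x : Fin n → Fin p → ℝ) (y : Fin n → ℝ) (βt : ℝ → Fin p → ℝ)
    (i : Fin n) (t : ℝ) : ℝ :=
  y i - dotp (x i) (βt t)

theorem min_pvalConf_le {n p : ℕ} (x : Fin n → Fin p → ℝ) (y : Fin n → ℝ) (xnew : Fin p → ℝ)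
    (βt : ℝ → Fin p → ℝ)
    (hadd : ∀ i, Monotone (newResidual xnew βt + sampleResidual x y βt i))
    (hsub : ∀ i, Monotone (newResidual xnew βt - sampleResidual x y βt i))
    {s t u : ℝ} (hst : s ≤ t) (htu : t ≤ u) :
    min (pvalConf x y xnew βt s) (pvalConf x y xnew βt u) ≤ pvalConf x y xnew βt t := by
  have hφ : Antitone fun k : ℕ => 1 - ((k : ℝ) + 1) / (n + 1) := fun k l hkl => by
    dsimp only
    gcongr
  exact hφ.map_max ▸
    hφ (card_filter_abs_le_abs_le_max (a := newResidual xnew βt) hadd hsub hst htu)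

section LassoHomotopy

variable {n p : ℕ} (x : Fin n → Fin p → ℝ) (xnew : Fin p → ℝ) (J : Finset (Fin p))

theorem dotp_eq_dotProduct (a b : Fin p → ℝ) : dotp a b = a ⬝ᵥ b := rfl

theorem gramJ_eq_smul :
    gramJ x J = (1 / (n : ℝ)) •
      ((Matrix.of fun i (a : J) => x i a)ᵀ * Matrix.of fun i (a : J) => x i a) := by
  ext a b
  simp [gramJ, Matrix.mul_apply]

theorem gramJ_posSemidef : (gramJ x J).PosSemidef := by
  rw [gramJ_eq_smul]
  exact (Matrix.posSemidef_conjTranspose_mul_self _).smul (by positivity)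

theorem subv_dotProduct_invPart_nonneg : 0 ≤ subv xnew J ⬝ᵥ invPart x J xnew :=
  (gramJ_posSemidef x J).inv.dotProduct_mulVec_nonneg (subv xnew J)

theorem denomC_pos : 0 < denomC x J xnew := by
  have := subv_dotProduct_invPart_nonneg x xnew J
  unfold denomC
  positivity

theorem dotp_etaV (u : Fin p → ℝ) :
    dotp u (etaV x J xnew) = 1 / (n : ℝ) * (subv u J ⬝ᵥ invPart x J xnew) / denomC x J xnew := by
  rw [dotp, ← Finset.sum_subset (subset_univ J) fun j _ hj => by simp [etaV, hj],
    ← Finset.sum_coe_sort J, dotProduct, Finset.mul_sum, Finset.sum_div]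
  refine Finset.sum_congr rfl fun a _ => ?_
  simp only [etaV, a.2, dif_pos, subv]
  ring

theorem one_sub_dotp_etaV_sub_dotp_etaV_nonneg {u : Fin p → ℝ}
    (hu : |subv u J ⬝ᵥ invPart x J xnew| ≤ n) :
    0 ≤ 1 - dotp xnew (etaV x J xnew) - dotp u (etaV x J xnew) := by
  have hD := denomC_pos x xnew J
  have hu' : 1 / (n : ℝ) * (subv u J ⬝ᵥ invPart x J xnew) ≤ 1 := by
    rw [one_div_mul_eq_div]
    exact div_le_one_of_le₀ ((le_abs_self _).trans hu) n.cast_nonneg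
  have hslope : 1 - dotp xnew (etaV x J xnew) - dotp u (etaV x J xnew)
      = (1 - 1 / (n : ℝ) * (subv u J ⬝ᵥ invPart x J xnew)) / denomC x J xnew := by
    rw [dotp_etaV, dotp_etaV, eq_div_iff hD.ne']
    field_simp
    rw [denomC]
    ring
  rw [hslope]
  exact div_nonneg (sub_nonneg.mpr hu') hD.le

end LassoHomotopy

def IsPathPiece {n p : ℕ} (x : Fin n → Fin p → ℝ) (xnew : Fin p → ℝ) (βt : ℝ → Fin p → ℝ)
    (t₀ : ℝ) (s : Set ℝ) : Prop :=
  ∃ J : Finset (Fin p), (∀ i, |subv (x i) J ⬝ᵥ invPart x J xnew| < (n : ℝ)) ∧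
    ∀ t ∈ s, (∀ j ∉ J, βt t j = 0) ∧ (∀ j ∈ J, βt t j = βt t₀ j + etaV x J xnew j * (t - t₀))

section PathPiece

variable {n p : ℕ} {x : Fin n → Fin p → ℝ} {xnew : Fin p → ℝ} {βt : ℝ → Fin p → ℝ} {t₀ : ℝ}
  {s : Set ℝ}

theorem exists_residual_combination_affine_of_isPathPiece (y : Fin n → ℝ)
    (h : IsPathPiece x xnew βt t₀ s) (ht₀ : t₀ ∈ s) (i : Fin n) {ε : ℝ} (hε : |ε| ≤ 1) :
    ∃ m, 0 ≤ m ∧ ∀ t ∈ s, (newResidual xnew βt + ε • sampleResidual x y βt i) t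
      = (newResidual xnew βt + ε • sampleResidual x y βt i) t₀ + m * (t - t₀) := by
  obtain ⟨J, hcross, hlin⟩ := h
  have hβ : ∀ t ∈ s, βt t = βt t₀ + (t - t₀) • etaV x J xnew := fun t ht => by
    ext j
    by_cases hj : j ∈ J
    · simp [(hlin t ht).2 j hj, mul_comm]
    · simp [(hlin t ht).1 j hj, (hlin t₀ ht₀).1 j hj, etaV, hj]
  have hu : |subv (ε • x i) J ⬝ᵥ invPart x J xnew| ≤ n := by
    rw [show subv (ε • x i) J = ε • subv (x i) J from rfl, smul_dotProduct, smul_eq_mul, abs_mul]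
    exact (mul_le_of_le_one_left (abs_nonneg _) hε).trans (hcross i).le
  refine ⟨_, one_sub_dotp_etaV_sub_dotp_etaV_nonneg x xnew J hu, fun t ht => ?_⟩
  simp only [Pi.add_apply, Pi.smul_apply, smul_eq_mul, newResidual, sampleResidual, hβ t ht,
    dotp_eq_dotProduct, dotProduct_add, dotProduct_smul, smul_dotProduct]
  ring

theorem monotone_newResidual_add_smul_sampleResidual (y : Fin n → ℝ)
    (hright : ∀ t₀, ∃ δ, 0 < δ ∧ IsPathPiece x xnew βt t₀ (Icc t₀ (t₀ + δ)))
    (hleft : ∀ t₀, ∃ δ, 0 < δ ∧ IsPathPiece x xnew βt t₀ (Icc (t₀ - δ) t₀))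
    (i : Fin n) {ε : ℝ} (hε : |ε| ≤ 1) :
    Monotone (newResidual xnew βt + ε • sampleResidual x y βt i) := by
  refine monotone_of_eventually_nhdsGE_nhdsLE (fun t₀ => ?_) (fun t₀ => ?_)
  · obtain ⟨δ, hδ, h⟩ := hright t₀
    obtain ⟨m, hm, hg⟩ :=
      exists_residual_combination_affine_of_isPathPiece y h (left_mem_Icc.2 (by linarith)) i hε
    filter_upwards [Icc_mem_nhdsGE (lt_add_of_pos_right t₀ hδ)] with t ht
    rw [hg t ht]
    exact le_add_of_nonneg_right (mul_nonneg hm (sub_nonneg.2 ht.1))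
  · obtain ⟨δ, hδ, h⟩ := hleft t₀
    obtain ⟨m, hm, hg⟩ :=
      exists_residual_combination_affine_of_isPathPiece y h (right_mem_Icc.2 (by linarith)) i hε
    filter_upwards [Icc_mem_nhdsLE (sub_lt_self t₀ hδ)] with t ht
    rw [hg t ht]
    exact add_le_of_nonpos_right (mul_nonpos_of_nonneg_of_nonpos hm (sub_nonpos.2 ht.2))

end PathPiece

theorem lasso_conformal_set_interval_general {n p : ℕ} (x : Fin n → Fin p → ℝ) (y : Fin n → ℝ)
    (xnew : Fin p → ℝ) (α : ℝ)
    (βt : ℝ → Fin p → ℝ)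
    (hpath_right : ∀ t₀ : ℝ, ∃ δ : ℝ, 0 < δ ∧ ∃ J : Finset (Fin p),
      IsUnit (gramJ x J) ∧
      (∀ i, |subv (x i) J ⬝ᵥ invPart x J xnew| < (n : ℝ)) ∧
      ∀ t ∈ Set.Icc t₀ (t₀ + δ),
        (∀ j ∉ J, βt t j = 0) ∧
        (∀ j ∈ J, βt t j = βt t₀ j + etaV x J xnew j * (t - t₀)))
    (hpath_left : ∀ t₀ : ℝ, ∃ δ : ℝ, 0 < δ ∧ ∃ J : Finset (Fin p),
      IsUnit (gramJ x J) ∧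
      (∀ i, |subv (x i) J ⬝ᵥ invPart x J xnew| < (n : ℝ)) ∧
      ∀ t ∈ Set.Icc (t₀ - δ) t₀,
        (∀ j ∉ J, βt t j = 0) ∧
        (∀ j ∈ J, βt t j = βt t₀ j + etaV x J xnew j * (t - t₀))) :
    {t : ℝ | α ≤ pvalConf x y xnew βt t}.OrdConnected := by
  have hright : ∀ t₀, ∃ δ, 0 < δ ∧ IsPathPiece x xnew βt t₀ (Icc t₀ (t₀ + δ)) := fun t₀ =>
    let ⟨δ, hδ, J, _, hJ⟩ := hpath_right t₀
    ⟨δ, hδ, J, hJ⟩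
  have hleft : ∀ t₀, ∃ δ, 0 < δ ∧ IsPathPiece x xnew βt t₀ (Icc (t₀ - δ) t₀) := fun t₀ =>
    let ⟨δ, hδ, J, _, hJ⟩ := hpath_left t₀
    ⟨δ, hδ, J, hJ⟩
  have hmono := monotone_newResidual_add_smul_sampleResidual y hright hleft
  refine Set.ordConnected_setOf_le_of_min_le (fun s t u hst htu => ?_) α
  refine min_pvalConf_le x y xnew βt (fun i => ?_) (fun i => ?_) hst htu
  · simpa using hmono i (ε := 1) (by simp)
  · simpa [sub_eq_add_neg] using hmono i (ε := -1) (by simp)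

/-- Theorem 2 of the paper: if the piecewise linear perturb-one Lasso homotopy is
valid for all `t ∈ ℝ` (locally around every `t₀` the solution evolves linearly with slope
`η(J)` for an active set `J` with full-rank `Σ̂_J`), and every active set `J` occurring along
the path satisfies the cross-leverage bound `max_{1≤i≤n} |x_{i,J}'Σ̂_J⁻¹x_{n+1,J}| < n`, then
the Lasso conformal prediction set `Ĉ(x_{n+1}) = {y : p̂_y ≥ α}` is an interval (an
order-connected subset of `ℝ`). -/
theorem lasso_conformal_set_interval {n p : ℕ} (x : Fin n → Fin p → ℝ) (y : Fin n → ℝ)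
    (xnew : Fin p → ℝ) (lam : ℝ) (hlam : 0 < lam) (α : ℝ) (hα : α ∈ Set.Ioo (0 : ℝ) 1)
    (βt : ℝ → Fin p → ℝ)
    (hβt : ∀ t : ℝ, ∀ β, augObj x y xnew lam t (βt t) ≤ augObj x y xnew lam t β)
    (hpath_right : ∀ t₀ : ℝ, ∃ δ : ℝ, 0 < δ ∧ ∃ J : Finset (Fin p),
      IsUnit (gramJ x J) ∧
      (∀ i, |subv (x i) J ⬝ᵥ invPart x J xnew| < (n : ℝ)) ∧
      ∀ t ∈ Set.Icc t₀ (t₀ + δ),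
        (∀ j ∉ J, βt t j = 0) ∧
        (∀ j ∈ J, βt t j = βt t₀ j + etaV x J xnew j * (t - t₀)))
    (hpath_left : ∀ t₀ : ℝ, ∃ δ : ℝ, 0 < δ ∧ ∃ J : Finset (Fin p),
      IsUnit (gramJ x J) ∧
      (∀ i, |subv (x i) J ⬝ᵥ invPart x J xnew| < (n : ℝ)) ∧
      ∀ t ∈ Set.Icc (t₀ - δ) t₀,
        (∀ j ∉ J, βt t j = 0) ∧
        (∀ j ∈ J, βt t j = βt t₀ j + etaV x J xnew j * (t - t₀))) :
    {t : ℝ | α ≤ pvalConf x y xnew βt t}.OrdConnected :=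
  lasso_conformal_set_interval_general x y xnew α βt hpath_right hpath_left
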